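/- Let Γ ⊆ E and let ψ be a non-degenerate eigenvector of L^Γ whose eigenvalue is the k-th smallest eigenvalue λ_k(Γ) of L^Γ. Let P be the nodal partition of ψ: its parts are the vertex sets of the nodal domains of ψ with respect to σ^Γ, and ∂P equals the nodal set of ψ. Then there exists α ∈ ℝ^{∂P} with all entries positive such that (P, α) is an equipartition with Λ(P, α) = λ_k(Γ). -/

import Mathlib

open Matrix Finset

noncomputable section

variable {V : Type*}

/-- The signed Laplacian of the weighted graph `(G,w)` with signature `σ`. -/
def signedLaplacian [Fintype V] [DecidableEq V] (G : SimpleGraph V) [DecidableRel G.Adj]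
    (w σ : V → V → ℝ) : Matrix V V ℝ :=
  Matrix.of fun i j =>
    if i = j then ∑ k, if G.Adj i k then w i k else 0
    else if G.Adj i j then -(σ i j * w i j) else 0

/-- The `n`-th smallest eigenvalue (1-based, counted with multiplicity) of a real
symmetric matrix; junk value `0` if the matrix is not Hermitian or `n` is out of range. -/
def nthEigenvalue [Fintype V] [DecidableEq V] (A : Matrix V V ℝ) (n : ℕ) : ℝ :=
  if h : A.IsHermitian ∧ n - 1 < Fintype.card V then
    let f : Fin (Fintype.card V) → ℝ := fun i => h.1.eigenvalues ((Fintype.equivFin V).symm i)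
    f (Tuple.sort f ⟨n - 1, h.2⟩)
  else 0

/-- `μ` is a simple eigenvalue of `A`: its eigenspace is one-dimensional. -/
def IsSimpleEigenvalue [Fintype V] [DecidableEq V] (A : Matrix V V ℝ) (μ : ℝ) : Prop :=
  Module.finrank ℝ (Module.End.eigenspace (Matrix.toLin' A) μ) = 1

/-- The nodal set of `u` with respect to the signature `σ`, as a set of (unordered) edges. -/
def nodalEdges (G : SimpleGraph V) (σ : V → V → ℝ) (u : V → ℝ) : Set (Sym2 V) :=
  {e | ∃ i j, e = s(i, j) ∧ G.Adj i j ∧ u i * σ i j * u j < 0}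

/-- The number of nodal domains of `u` on `(G,σ)`: the number of connected components
of the spanning subgraph obtained by deleting the nodal set. -/
def nodalCount (G : SimpleGraph V) (σ : V → V → ℝ) (u : V → ℝ) : ℕ :=
  Nat.card (G.deleteEdges (nodalEdges G σ u)).ConnectedComponent

/-- `(G,σ)` is balanced: every cycle has positive sign. -/
def IsBalanced (G : SimpleGraph V) (σ : V → V → ℝ) : Prop :=
  ∀ ⦃v : V⦄ (p : G.Walk v v), p.IsCycle →
    0 < (p.darts.map fun d => σ d.toProd.1 d.toProd.2).prod

/-- The matrix `B_{ij}(a)`. -/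
def Bmat [DecidableEq V] (i j : V) (a : ℝ) : Matrix V V ℝ :=
  Matrix.of fun x y =>
    if x = i ∧ y = i then a
    else if x = j ∧ y = j then a⁻¹
    else if (x = i ∧ y = j) ∨ (x = j ∧ y = i) then -1
    else 0

/-- The signature `σ^{∂P}` determined by the partition `P`. -/
def partSgn {ν : ℕ} (P : V → Fin ν) (i j : V) : ℝ :=
  if P i = P j then 1 else -1

/-- `L^{∂P}(P,α)`: the partition Laplacian perturbed by the rank-one parameter matrices
on the oriented boundary edges `O`. -/
def paramMatrix [Fintype V] [DecidableEq V] (G : SimpleGraph V) [DecidableRel G.Adj]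
    (w : V → V → ℝ) {ν : ℕ} (P : V → Fin ν) (O : Finset (V × V)) (α : V × V → ℝ) :
    Matrix V V ℝ :=
  signedLaplacian G w (partSgn P) + ∑ p ∈ O, w p.1 p.2 • Bmat p.1 p.2 (α p)

/-- The principal submatrix of `M` on the `k`-th part of the partition `P`. -/
def blockMatrix {ν : ℕ} (M : Matrix V V ℝ) (P : V → Fin ν) (k : Fin ν) :
    Matrix {v : V // P v = k} {v : V // P v = k} ℝ :=
  M.submatrix Subtype.val Subtype.val

/-- `λ₁(G_k, α)`: the smallest eigenvalue of the block of `L^{∂P}(P,α)` on part `k`. -/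
def lam1Block [Fintype V] [DecidableEq V] {ν : ℕ} (M : Matrix V V ℝ) (P : V → Fin ν)
    (k : Fin ν) : ℝ :=
  nthEigenvalue (blockMatrix M P k) 1

/-- The partition energy `Λ(P, α) = max_k λ₁(G_k, α)`. -/
def PartitionEnergy [Fintype V] [DecidableEq V] (G : SimpleGraph V) [DecidableRel G.Adj]
    (w : V → V → ℝ) {ν : ℕ} (P : V → Fin ν) (O : Finset (V × V)) (α : V × V → ℝ) : ℝ :=
  ⨆ k : Fin ν, lam1Block (paramMatrix G w P O α) P k

/-- `(P, α)` is an equipartition: all the first block eigenvalues agree. -/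
def IsEquipartition [Fintype V] [DecidableEq V] (G : SimpleGraph V) [DecidableRel G.Adj]
    (w : V → V → ℝ) {ν : ℕ} (P : V → Fin ν) (O : Finset (V × V)) (α : V × V → ℝ) : Prop :=
  ∀ k l : Fin ν, lam1Block (paramMatrix G w P O α) P k = lam1Block (paramMatrix G w P O α) P l


open Classical in
/-- The signature `σ^Γ` associated to a set of edges `Γ`: `-1` on `Γ`, `+1` elsewhere. -/
def sgnOfEdgeSet (Γ : Set (Sym2 V)) (i j : V) : ℝ :=
  if s(i, j) ∈ Γ then -1 else 1

/-! Let `s = sign ψ` and `φ = |ψ|`. Since `∂P` is the nodal set of `ψ`, the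
switching `s_i σ^Γ_ij s_j` equals `σ^{∂P}_ij` on every edge, so conjugating by `diag s` turns
`L^Γ ψ = λ ψ` into `L^{∂P} φ = λ φ`. With `α_ij = φ_j / φ_i` the vector `φ` lies in the kernel of
every `B_ij(α_ij)`, hence `L^{∂P}(P, α) φ = λ φ`. This matrix is block diagonal, and each block is
symmetric with nonpositive off-diagonal entries and has the positive eigenvector `φ|_{V_k}`; by the
ground state transform such an eigenvector belongs to the smallest eigenvalue, so every
`λ₁(G_k, α)` equals `λ`. -/

namespace Matrix

variable {n : Type*} [Fintype n]

theorem sum_mul_sub_sq_eq_of_mulVec_eq_smul {A : Matrix n n ℝ} (hA : A.IsHermitian)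
    {φ : n → ℝ} {lam : ℝ} (hφ : A *ᵥ φ = lam • φ) (g : n → ℝ) :
    ∑ i, ∑ j, A i j * φ i * φ j * (g i - g j) ^ 2 =
      2 * (lam * ∑ i, (φ i * g i) ^ 2 - ∑ i, ∑ j, A i j * (φ i * g i) * (φ j * g j)) := by
  have hrow : ∀ i, ∑ j, A i j * φ j = lam * φ i := fun i => by
    simpa [mulVec, dotProduct] using congrFun hφ i
  have hcol : ∀ j, ∑ i, A i j * φ i = lam * φ j := fun j => by
    rw [← hrow j]
    exact sum_congr rfl fun i _ => by rw [← hA.apply j i, star_trivial]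
  have hleft : ∑ i, ∑ j, A i j * φ i * φ j * g i ^ 2 = lam * ∑ i, (φ i * g i) ^ 2 := by
    calc ∑ i, ∑ j, A i j * φ i * φ j * g i ^ 2 = ∑ i, φ i * g i ^ 2 * ∑ j, A i j * φ j :=
          sum_congr rfl fun i _ => by rw [mul_sum]; exact sum_congr rfl fun j _ => by ring
      _ = lam * ∑ i, (φ i * g i) ^ 2 := by
          simp only [hrow, mul_sum]; exact sum_congr rfl fun i _ => by ring
  have hright : ∑ i, ∑ j, A i j * φ i * φ j * g j ^ 2 = lam * ∑ i, (φ i * g i) ^ 2 := by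
    calc ∑ i, ∑ j, A i j * φ i * φ j * g j ^ 2 = ∑ j, φ j * g j ^ 2 * ∑ i, A i j * φ i := by
          rw [sum_comm]
          exact sum_congr rfl fun j _ => by rw [mul_sum]; exact sum_congr rfl fun i _ => by ring
      _ = lam * ∑ i, (φ i * g i) ^ 2 := by
          simp only [hcol, mul_sum]; exact sum_congr rfl fun i _ => by ring
  have hexpand : ∀ i j, A i j * φ i * φ j * (g i - g j) ^ 2 =
      A i j * φ i * φ j * g i ^ 2 + A i j * φ i * φ j * g j ^ 2 -
        2 * (A i j * (φ i * g i) * (φ j * g j)) := fun i j => by ring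
  simp only [hexpand, sum_add_distrib, sum_sub_distrib, ← mul_sum, hleft, hright]
  ring

theorem le_of_mulVec_eq_smul_of_pos_eigenvector {A : Matrix n n ℝ} (hA : A.IsHermitian)
    (hoff : ∀ i j, i ≠ j → A i j ≤ 0) {φ : n → ℝ} (hφpos : ∀ i, 0 < φ i) {lam : ℝ}
    (hφ : A *ᵥ φ = lam • φ) {x : n → ℝ} (hx : x ≠ 0) {μ : ℝ} (hxμ : A *ᵥ x = μ • x) :
    lam ≤ μ := by
  have hxφ : ∀ i, φ i * (x i / φ i) = x i := fun i => mul_div_cancel₀ _ (hφpos i).ne'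
  have hid := sum_mul_sub_sq_eq_of_mulVec_eq_smul hA hφ (fun i => x i / φ i)
  simp only [hxφ] at hid
  have hnonpos : ∑ i, ∑ j, A i j * φ i * φ j * (x i / φ i - x j / φ j) ^ 2 ≤ 0 := by
    refine sum_nonpos fun i _ => sum_nonpos fun j _ => ?_
    rcases eq_or_ne i j with rfl | hij
    · simp
    · have := mul_nonpos_of_nonpos_of_nonneg (hoff i j hij)
        (mul_nonneg (mul_pos (hφpos i) (hφpos j)).le (sq_nonneg (x i / φ i - x j / φ j)))
      linarith
  have hquad : ∑ i, ∑ j, A i j * x i * x j = μ * ∑ i, x i ^ 2 := by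
    rw [mul_sum]
    refine sum_congr rfl fun i _ => ?_
    have hrow : ∑ j, A i j * x j = μ * x i := by simpa [mulVec, dotProduct] using congrFun hxμ i
    calc ∑ j, A i j * x i * x j = x i * ∑ j, A i j * x j :=
          by rw [mul_sum]; exact sum_congr rfl fun j _ => by ring
      _ = μ * x i ^ 2 := by rw [hrow]; ring
  have hnorm : 0 < ∑ i, x i ^ 2 := by
    obtain ⟨i, hi⟩ := Function.ne_iff.mp hx
    exact sum_pos' (fun i _ => sq_nonneg _) ⟨i, mem_univ i, sq_pos_of_ne_zero hi⟩
  nlinarith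

variable [DecidableEq n]

theorem mem_spectrum_of_mulVec_eq_smul {A : Matrix n n ℝ} {x : n → ℝ} (hx : x ≠ 0) {μ : ℝ}
    (h : A *ᵥ x = μ • x) : μ ∈ spectrum ℝ A := by
  rw [← spectrum_toLin']
  exact (Module.End.hasEigenvalue_of_hasEigenvector
    ⟨Module.End.mem_eigenspace_iff.mpr h, hx⟩).mem_spectrum

theorem isLeast_eigenvalues_of_pos_eigenvector [Nonempty n] {A : Matrix n n ℝ}
    (hA : A.IsHermitian) (hoff : ∀ i j, i ≠ j → A i j ≤ 0) {φ : n → ℝ} (hφpos : ∀ i, 0 < φ i)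
    {lam : ℝ} (hφ : A *ᵥ φ = lam • φ) : IsLeast (Set.range hA.eigenvalues) lam := by
  have hφ0 : φ ≠ 0 := fun h => (hφpos (Classical.arbitrary n)).ne' (congrFun h _)
  refine ⟨hA.spectrum_real_eq_range_eigenvalues ▸ mem_spectrum_of_mulVec_eq_smul hφ0 hφ, ?_⟩
  rintro _ ⟨i, rfl⟩
  exact le_of_mulVec_eq_smul_of_pos_eigenvector hA hoff hφpos hφ
    ((WithLp.ofLp_eq_zero 2).ne.2 <| hA.eigenvectorBasis.orthonormal.ne_zero i)
    (hA.mulVec_eigenvectorBasis i)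

end Matrix

theorem nthEigenvalue_one_eq_of_isLeast {n : Type*} [Fintype n] [DecidableEq n]
    {A : Matrix n n ℝ} (hA : A.IsHermitian) {μ : ℝ} (h : IsLeast (Set.range hA.eigenvalues) μ) :
    nthEigenvalue A 1 = μ := by
  obtain ⟨⟨i, hi⟩, hlow⟩ := h
  have hcard : 1 - 1 < Fintype.card n := by simpa using Fintype.card_pos_iff.mpr ⟨i⟩
  rw [nthEigenvalue, dif_pos ⟨hA, hcard⟩]
  set f : Fin (Fintype.card n) → ℝ := fun i => hA.eigenvalues ((Fintype.equivFin n).symm i)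
  refine le_antisymm ?_ (hlow ⟨_, rfl⟩)
  calc f (Tuple.sort f ⟨1 - 1, hcard⟩)
      ≤ f (Tuple.sort f ((Tuple.sort f).symm (Fintype.equivFin n i))) :=
        Tuple.monotone_sort f (by simp [Fin.le_def])
    _ = μ := by simp [f, hi]

theorem nthEigenvalue_one_eq_of_pos_eigenvector {n : Type*} [Fintype n] [DecidableEq n]
    [Nonempty n] {A : Matrix n n ℝ} (hA : A.IsHermitian) (hoff : ∀ i j, i ≠ j → A i j ≤ 0)
    {φ : n → ℝ} (hφpos : ∀ i, 0 < φ i) {lam : ℝ} (hφ : A *ᵥ φ = lam • φ) :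
    nthEigenvalue A 1 = lam :=
  nthEigenvalue_one_eq_of_isLeast hA (isLeast_eigenvalues_of_pos_eigenvector hA hoff hφpos hφ)

theorem sign_mul_mul_sign_eq_ite {a b e : ℝ} (ha : a ≠ 0) (hb : b ≠ 0) (he : e = 1 ∨ e = -1) :
    (SignType.sign a * e * SignType.sign b : ℝ) = if a * e * b < 0 then -1 else 1 := by
  have hse : (SignType.sign e : ℝ) = e := by rcases he with rfl | rfl <;> simp
  have hne : a * e * b ≠ 0 := by rcases he with rfl | rfl <;> simp [ha, hb]
  conv_lhs => rw [← hse, ← SignType.coe_mul, ← SignType.coe_mul, ← sign_mul, ← sign_mul]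
  rcases hne.lt_or_gt with h | h
  · simp [h]
  · simp [h, h.not_gt]

theorem sgnOfEdgeSet_eq_one_or (Γ : Set (Sym2 V)) (i j : V) :
    sgnOfEdgeSet Γ i j = 1 ∨ sgnOfEdgeSet Γ i j = -1 := by
  unfold sgnOfEdgeSet
  split_ifs <;> simp

theorem Bmat_apply_of_ne [DecidableEq V] {i j x y : V} (a : ℝ) (hxy : x ≠ y) :
    Bmat i j a x y = if (x = i ∧ y = j) ∨ (x = j ∧ y = i) then -1 else 0 := by
  simp only [Bmat, of_apply]
  rw [if_neg fun h => hxy (h.1.trans h.2.symm), if_neg fun h => hxy (h.1.trans h.2.symm)]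

theorem Bmat_mulVec_div_eq_zero [Fintype V] [DecidableEq V] {i j : V} (hij : i ≠ j)
    {x : V → ℝ} (hi : x i ≠ 0) (hj : x j ≠ 0) : Bmat i j (x j / x i) *ᵥ x = 0 := by
  funext y
  simp only [mulVec, dotProduct, Bmat, of_apply, Pi.zero_apply]
  rw [Fintype.sum_eq_add i j hij fun z hz => by simp [hz.1, hz.2]]
  rcases eq_or_ne y i with rfl | hyi
  · simp [hij, hij.symm, hi]
  rcases eq_or_ne y j with rfl | hyj
  · simp [hij, hij.symm, hj]
  · simp [hyi, hyj]

theorem sum_smul_Bmat_apply_of_ne [Fintype V] [DecidableEq V] (O : Finset (V × V))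
    (w : V → V → ℝ) (α : V × V → ℝ) {x y : V} (hxy : x ≠ y) :
    (∑ p ∈ O, w p.1 p.2 • Bmat p.1 p.2 (α p)) x y =
      -((if (x, y) ∈ O then w x y else 0) + (if (y, x) ∈ O then w y x else 0)) := by
  have hB : ∀ p : V × V, (w p.1 p.2 • Bmat p.1 p.2 (α p)) x y =
      -((if p = (x, y) then w x y else 0) + (if p = (y, x) then w y x else 0)) := by
    rintro ⟨a, b⟩
    rw [Matrix.smul_apply, smul_eq_mul, Bmat_apply_of_ne _ hxy]
    simp only [Prod.mk.injEq]
    by_cases h1 : a = x ∧ b = y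
    · obtain ⟨rfl, rfl⟩ := h1
      simp [hxy]
    by_cases h2 : a = y ∧ b = x
    · obtain ⟨rfl, rfl⟩ := h2
      simp [hxy]
    rw [if_neg h1, if_neg h2, if_neg fun h => h.elim (fun h' => h1 ⟨h'.1.symm, h'.2.symm⟩)
      fun h' => h2 ⟨h'.2.symm, h'.1.symm⟩]
    simp
  rw [Matrix.sum_apply, sum_congr rfl fun p _ => hB p, sum_neg_distrib, sum_add_distrib,
    sum_ite_eq', sum_ite_eq']

section Laplacian

variable [Fintype V] [DecidableEq V] (G : SimpleGraph V) [DecidableRel G.Adj]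

theorem signedLaplacian_eq_diagonal_mul_mul_diagonal {w σ σ' : V → V → ℝ} {s : V → ℝ}
    (hs : ∀ i, s i * s i = 1) (hσ' : ∀ i j, G.Adj i j → σ' i j = s i * σ i j * s j) :
    signedLaplacian G w σ' = diagonal s * signedLaplacian G w σ * diagonal s := by
  ext i j
  rw [mul_diagonal, diagonal_mul]
  simp only [signedLaplacian, of_apply]
  split_ifs with hij hadj
  · subst hij
    linear_combination (∑ k, if G.Adj i k then w i k else 0) * (hs i).symm
  · rw [hσ' i j hadj]; ring
  · simp

theorem signedLaplacian_mulVec_diagonal_mulVec {w σ σ' : V → V → ℝ} {s : V → ℝ}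
    (hs : ∀ i, s i * s i = 1) (hσ' : ∀ i j, G.Adj i j → σ' i j = s i * σ i j * s j)
    {ψ : V → ℝ} {lam : ℝ} (hψ : signedLaplacian G w σ *ᵥ ψ = lam • ψ) :
    signedLaplacian G w σ' *ᵥ (diagonal s *ᵥ ψ) = lam • (diagonal s *ᵥ ψ) := by
  have hss : diagonal s * diagonal s = 1 := by
    rw [diagonal_mul_diagonal, ← diagonal_one]; exact congrArg diagonal (funext hs)
  rw [signedLaplacian_eq_diagonal_mul_mul_diagonal G hs hσ', mulVec_mulVec, mul_assoc, hss,
    mul_one, ← mulVec_mulVec, hψ, mulVec_smul]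

theorem signedLaplacian_partSgn_mulVec_abs {w : V → V → ℝ} {Γ : Set (Sym2 V)} {ψ : V → ℝ}
    {lam : ℝ} (heig : signedLaplacian G w (sgnOfEdgeSet Γ) *ᵥ ψ = lam • ψ)
    (hψnz : ∀ v, ψ v ≠ 0) {ν : ℕ} {P : V → Fin ν}
    (hbdry : ∀ i j : V, G.Adj i j → (P i ≠ P j ↔ ψ i * sgnOfEdgeSet Γ i j * ψ j < 0)) :
    signedLaplacian G w (partSgn P) *ᵥ (fun v => |ψ v|) = lam • fun v => |ψ v| := by
  have hswitch : ∀ i j, G.Adj i j →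
      partSgn P i j = SignType.sign (ψ i) * sgnOfEdgeSet Γ i j * SignType.sign (ψ j) := by
    intro i j hij
    rw [sign_mul_mul_sign_eq_ite (hψnz i) (hψnz j) (sgnOfEdgeSet_eq_one_or Γ i j), partSgn]
    by_cases hP : P i = P j
    · rw [if_pos hP, if_neg fun h => (hbdry i j hij).mpr h hP]
    · rw [if_neg hP, if_pos ((hbdry i j hij).mp hP)]
  have hsign_sq : ∀ v, (SignType.sign (ψ v) : ℝ) * SignType.sign (ψ v) = 1 := fun v => by
    rcases (hψnz v).lt_or_gt with h | h <;> simp [h]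
  have habs : diagonal (fun v => (SignType.sign (ψ v) : ℝ)) *ᵥ ψ = fun v => |ψ v| := by
    funext v
    simp [mulVec_diagonal]
  rw [← habs]
  exact signedLaplacian_mulVec_diagonal_mulVec G hsign_sq hswitch heig

end Laplacian

theorem blockMatrix_mulVec {ν : ℕ} [Fintype V] {M : Matrix V V ℝ} {P : V → Fin ν}
    (hM : ∀ x y, P x ≠ P y → M x y = 0) (k : Fin ν) (φ : V → ℝ) :
    blockMatrix M P k *ᵥ (fun v : {v // P v = k} => φ v) =
      fun v : {v // P v = k} => (M *ᵥ φ) v := by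
  funext v
  simp only [mulVec, dotProduct, blockMatrix, submatrix_apply]
  rw [← Fintype.sum_subtype_add_sum_subtype (fun y => P y = k) (fun y => M v y * φ y),
    Fintype.sum_eq_zero (fun y : {y // ¬ P y = k} => M v y * φ y), add_zero]
  intro y
  rw [hM v y fun h => y.2 (h.symm.trans v.2), zero_mul]

section PartitionMatrix

variable [Fintype V] [DecidableEq V] {G : SimpleGraph V} [DecidableRel G.Adj] {w : V → V → ℝ}
  {ν : ℕ} {P : V → Fin ν} {O : Finset (V × V)}

theorem paramMatrix_apply_of_ne (hwsymm : ∀ i j, w i j = w j i)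
    (hO : ∀ p ∈ O, G.Adj p.1 p.2 ∧ P p.1 ≠ P p.2)
    (hOorient : ∀ i j, G.Adj i j → P i ≠ P j → ((i, j) ∈ O ↔ (j, i) ∉ O))
    (α : V × V → ℝ) {x y : V} (hxy : x ≠ y) :
    paramMatrix G w P O α x y = if G.Adj x y ∧ P x = P y then -w x y else 0 := by
  rw [paramMatrix, Matrix.add_apply, sum_smul_Bmat_apply_of_ne _ _ _ hxy]
  simp only [signedLaplacian, of_apply, if_neg hxy, partSgn]
  by_cases hadj : G.Adj x y
  · by_cases hP : P x = P y
    · have hxy : (x, y) ∉ O := fun h => (hO _ h).2 hP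
      have hyx : (y, x) ∉ O := fun h => (hO _ h).2 hP.symm
      simp [hadj, hP, hxy, hyx]
    · rw [← hwsymm x y]
      by_cases hxyO : (x, y) ∈ O
      · simp [hadj, hP, hxyO, (hOorient x y hadj hP).mp hxyO]
      · simp [hadj, hP, hxyO, not_not.mp (mt (hOorient x y hadj hP).mpr hxyO)]
  · have hxy : (x, y) ∉ O := fun h => hadj (hO _ h).1
    have hyx : (y, x) ∉ O := fun h => hadj (hO _ h).1.symm
    simp [hadj, hxy, hyx]

theorem paramMatrix_isHermitian (hwsymm : ∀ i j, w i j = w j i)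
    (hO : ∀ p ∈ O, G.Adj p.1 p.2 ∧ P p.1 ≠ P p.2)
    (hOorient : ∀ i j, G.Adj i j → P i ≠ P j → ((i, j) ∈ O ↔ (j, i) ∉ O)) (α : V × V → ℝ) :
    (paramMatrix G w P O α).IsHermitian := by
  ext x y
  rw [conjTranspose_apply, star_trivial]
  rcases eq_or_ne x y with rfl | hxy
  · rfl
  rw [paramMatrix_apply_of_ne hwsymm hO hOorient α hxy,
    paramMatrix_apply_of_ne hwsymm hO hOorient α hxy.symm]
  simp only [G.adj_comm y x, hwsymm y x, @eq_comm _ (P y)]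

theorem paramMatrix_apply_nonpos_of_ne (hwsymm : ∀ i j, w i j = w j i)
    (hwpos : ∀ i j, G.Adj i j → 0 < w i j) (hO : ∀ p ∈ O, G.Adj p.1 p.2 ∧ P p.1 ≠ P p.2)
    (hOorient : ∀ i j, G.Adj i j → P i ≠ P j → ((i, j) ∈ O ↔ (j, i) ∉ O))
    (α : V × V → ℝ) {x y : V} (hxy : x ≠ y) : paramMatrix G w P O α x y ≤ 0 := by
  rw [paramMatrix_apply_of_ne hwsymm hO hOorient α hxy]
  split_ifs with h
  · exact neg_nonpos.mpr (hwpos x y h.1).le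
  · rfl

theorem paramMatrix_apply_eq_zero_of_ne (hwsymm : ∀ i j, w i j = w j i)
    (hO : ∀ p ∈ O, G.Adj p.1 p.2 ∧ P p.1 ≠ P p.2)
    (hOorient : ∀ i j, G.Adj i j → P i ≠ P j → ((i, j) ∈ O ↔ (j, i) ∉ O))
    (α : V × V → ℝ) {x y : V} (hP : P x ≠ P y) : paramMatrix G w P O α x y = 0 := by
  rw [paramMatrix_apply_of_ne hwsymm hO hOorient α (fun h => hP (congrArg P h)),
    if_neg fun h => hP h.2]

theorem paramMatrix_mulVec_of_div (hO : ∀ p ∈ O, G.Adj p.1 p.2) {x : V → ℝ}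
    (hx : ∀ v, x v ≠ 0) :
    paramMatrix G w P O (fun p => x p.2 / x p.1) *ᵥ x = signedLaplacian G w (partSgn P) *ᵥ x := by
  rw [paramMatrix, add_mulVec, sum_mulVec, sum_eq_zero, add_zero]
  intro p hp
  rw [smul_mulVec, Bmat_mulVec_div_eq_zero (hO p hp).ne (hx _) (hx _), smul_zero]

theorem lam1Block_paramMatrix_eq_of_pos_eigenvector (hwsymm : ∀ i j, w i j = w j i)
    (hwpos : ∀ i j, G.Adj i j → 0 < w i j) (hO : ∀ p ∈ O, G.Adj p.1 p.2 ∧ P p.1 ≠ P p.2)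
    (hOorient : ∀ i j, G.Adj i j → P i ≠ P j → ((i, j) ∈ O ↔ (j, i) ∉ O))
    {α : V × V → ℝ} {φ : V → ℝ} (hφpos : ∀ v, 0 < φ v) {lam : ℝ}
    (hφ : paramMatrix G w P O α *ᵥ φ = lam • φ) {l : Fin ν} (hl : ∃ v, P v = l) :
    lam1Block (paramMatrix G w P O α) P l = lam := by
  obtain ⟨v, rfl⟩ := hl
  have : Nonempty {u // P u = P v} := ⟨⟨v, rfl⟩⟩
  have hev := blockMatrix_mulVec (M := paramMatrix G w P O α)
    (fun _ _ => paramMatrix_apply_eq_zero_of_ne hwsymm hO hOorient α) (P v) φ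
  rw [hφ] at hev
  exact nthEigenvalue_one_eq_of_pos_eigenvector (φ := fun u : {u // P u = P v} => φ u)
    ((paramMatrix_isHermitian hwsymm hO hOorient α).submatrix _)
    (fun x y hxy => paramMatrix_apply_nonpos_of_ne hwsymm hwpos hO hOorient α
      (Subtype.coe_injective.ne hxy)) (fun u => hφpos u) hev

end PartitionMatrix

theorem stmt15_general [Fintype V] [DecidableEq V] (G : SimpleGraph V) [DecidableRel G.Adj]
    (hGconn : G.Connected) (w : V → V → ℝ)
    (hwsymm : ∀ i j, w i j = w j i) (hwpos : ∀ i j, G.Adj i j → 0 < w i j)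
    (Γ : Set (Sym2 V))
    (ψ : V → ℝ) (lam : ℝ)
    (heig : (signedLaplacian G w (sgnOfEdgeSet Γ)).mulVec ψ = lam • ψ)
    (hψnz : ∀ v, ψ v ≠ 0)
    {ν : ℕ} (P : V → Fin ν) (hPsurj : Function.Surjective P)
    (hbdry : ∀ i j : V, G.Adj i j →
      (P i ≠ P j ↔ ψ i * sgnOfEdgeSet Γ i j * ψ j < 0))
    (O : Finset (V × V))
    (hO : ∀ p ∈ O, G.Adj p.1 p.2 ∧ P p.1 ≠ P p.2)
    (hOorient : ∀ i j, G.Adj i j → P i ≠ P j → ((i, j) ∈ O ↔ (j, i) ∉ O)) :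
    ∃ α : V × V → ℝ, (∀ p ∈ O, 0 < α p) ∧ IsEquipartition G w P O α ∧
      PartitionEnergy G w P O α = lam := by
  set φ : V → ℝ := fun v => |ψ v|
  have hφpos : ∀ v, 0 < φ v := fun v => abs_pos.mpr (hψnz v)
  set α : V × V → ℝ := fun p => φ p.2 / φ p.1
  have hM : paramMatrix G w P O α *ᵥ φ = lam • φ := by
    rw [paramMatrix_mulVec_of_div (fun p hp => (hO p hp).1) fun v => (hφpos v).ne',
      signedLaplacian_partSgn_mulVec_abs G heig hψnz hbdry]
  have hblock : ∀ l, lam1Block (paramMatrix G w P O α) P l = lam := fun l =>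
    lam1Block_paramMatrix_eq_of_pos_eigenvector hwsymm hwpos hO hOorient hφpos hM (hPsurj l)
  have : Nonempty (Fin ν) := ⟨P hGconn.nonempty.some⟩
  refine ⟨α, fun p _ => div_pos (hφpos _) (hφpos _), fun k l => by rw [hblock, hblock], ?_⟩
  simp only [PartitionEnergy, hblock, ciSup_const]

/-- If `ψ` is a non-degenerate eigenvector of `L^Γ` with eigenvalue
`λ_k(Γ)` and `P` is its nodal partition (the parts are the nodal domains of `ψ` and `∂P`
is the nodal set of `ψ`), then there is a positive parameter vector `α` making `(P, α)` an
equipartition with `Λ(P, α) = λ_k(Γ)`. -/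
theorem stmt15 [Fintype V] [DecidableEq V] (G : SimpleGraph V) [DecidableRel G.Adj]
    (hGconn : G.Connected) (w : V → V → ℝ)
    (hwsymm : ∀ i j, w i j = w j i) (hwpos : ∀ i j, G.Adj i j → 0 < w i j)
    (hw0 : ∀ i j, ¬ G.Adj i j → w i j = 0)
    (Γ : Set (Sym2 V)) (hΓ : Γ ⊆ G.edgeSet)
    (ψ : V → ℝ) (lam : ℝ) (k : ℕ) (hk1 : 1 ≤ k) (hk2 : k ≤ Fintype.card V)
    (heig : (signedLaplacian G w (sgnOfEdgeSet Γ)).mulVec ψ = lam • ψ)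
    (hψnz : ∀ v, ψ v ≠ 0)
    (hsimple : IsSimpleEigenvalue (signedLaplacian G w (sgnOfEdgeSet Γ)) lam)
    (hlam : lam = nthEigenvalue (signedLaplacian G w (sgnOfEdgeSet Γ)) k)
    {ν : ℕ} (P : V → Fin ν) (hPsurj : Function.Surjective P)
    (hPconn : ∀ l : Fin ν, (G.induce {v | P v = l}).Connected)
    (hparts : ∀ i j : V, P i = P j ↔
      (G.deleteEdges (nodalEdges G (sgnOfEdgeSet Γ) ψ)).Reachable i j)
    (hbdry : ∀ i j : V, G.Adj i j →
      (P i ≠ P j ↔ ψ i * sgnOfEdgeSet Γ i j * ψ j < 0))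
    (O : Finset (V × V))
    (hO : ∀ p ∈ O, G.Adj p.1 p.2 ∧ P p.1 ≠ P p.2)
    (hOorient : ∀ i j, G.Adj i j → P i ≠ P j → ((i, j) ∈ O ↔ (j, i) ∉ O)) :
    ∃ α : V × V → ℝ, (∀ p ∈ O, 0 < α p) ∧ IsEquipartition G w P O α ∧
      PartitionEnergy G w P O α = lam :=
  stmt15_general G hGconn w hwsymm hwpos Γ ψ lam heig hψnz P hPsurj hbdry O hO hOorient
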